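/- Assume n ≤ d. For every R > n and every activation function σ : ℝ → ℝ, one has H_MIRNN(n) ⊆ H_CPRNN(R,n) (both sides taken with the same d and the same σ). -/

import Mathlib

open Matrix MeasureTheory

noncomputable section

/-- The CP tensor `[[A,B,C]]`. -/
def cpT {d1 d2 d3 R : ℕ} (A : Matrix (Fin d1) (Fin R) ℝ) (B : Matrix (Fin d2) (Fin R) ℝ)
    (C : Matrix (Fin d3) (Fin R) ℝ) : Fin d1 → Fin d2 → Fin d3 → ℝ :=
  fun i j k => ∑ r, A i r * B j r * C k r

/-- `(T ×₁ u ×₂ v)` for a third order tensor `T`. -/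
def modeProd {d1 d2 d3 : ℕ} (T : Fin d1 → Fin d2 → Fin d3 → ℝ) (u : Fin d1 → ℝ)
    (v : Fin d2 → ℝ) : Fin d3 → ℝ :=
  fun k => ∑ i, ∑ j, T i j k * u i * v j

/-- The CP rank of a tensor: the minimal `R` admitting a rank-`R` CP decomposition. -/
def cprank {d1 d2 d3 : ℕ} (T : Fin d1 → Fin d2 → Fin d3 → ℝ) : ℕ :=
  sInf {R : ℕ | ∃ (A : Matrix (Fin d1) (Fin R) ℝ) (B : Matrix (Fin d2) (Fin R) ℝ)
    (C : Matrix (Fin d3) (Fin R) ℝ), T = cpT A B C}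

/-- The maximal CP rank of tensors in `ℝ^{d1×d2×d3}`. -/
def Rmax (d1 d2 d3 : ℕ) : ℕ :=
  sSup {r : ℕ | ∃ T : Fin d1 → Fin d2 → Fin d3 → ℝ, cprank T = r}

/-- `R` is a typical rank if the set of tensors of CP rank `R` has positive Lebesgue measure. -/
def IsTypicalRank (d1 d2 d3 R : ℕ) : Prop :=
  0 < volume {T : Fin d1 → Fin d2 → Fin d3 → ℝ | cprank T = R}

/-- The maximal typical CP rank. -/
def RtypMax (d1 d2 d3 : ℕ) : ℕ := sSup {R : ℕ | IsTypicalRank d1 d2 d3 R}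

/-- Hidden states of a CPRNN; `x t` is the input at time `t+1`. -/
def cprnnStates {n d R : ℕ} (σ : ℝ → ℝ) (h0 : Fin n → ℝ)
    (A : Matrix (Fin n) (Fin R) ℝ) (B : Matrix (Fin d) (Fin R) ℝ) (C : Matrix (Fin n) (Fin R) ℝ)
    (U : Matrix (Fin n) (Fin d) ℝ) (V : Matrix (Fin n) (Fin n) ℝ) (b : Fin n → ℝ)
    (x : ℕ → Fin d → ℝ) : ℕ → Fin n → ℝ
  | 0 => h0
  | t + 1 => fun k =>
      σ (modeProd (cpT A B C) (cprnnStates σ h0 A B C U V b x t) (x t) k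
        + V.mulVec (cprnnStates σ h0 A B C U V b x t) k + U.mulVec (x t) k + b k)

/-- Hidden states of a CPBIRNN (second-order term only). -/
def cpbirnnStates {n d R : ℕ} (σ : ℝ → ℝ) (h0 : Fin n → ℝ)
    (A : Matrix (Fin n) (Fin R) ℝ) (B : Matrix (Fin d) (Fin R) ℝ) (C : Matrix (Fin n) (Fin R) ℝ)
    (x : ℕ → Fin d → ℝ) : ℕ → Fin n → ℝ
  | 0 => h0
  | t + 1 => fun k =>
      σ (modeProd (cpT A B C) (cpbirnnStates σ h0 A B C x t) (x t) k)

/-- Hidden states of a 2RNN with arbitrary second-order tensor. -/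
def rnn2States {n d : ℕ} (σ : ℝ → ℝ) (h0 : Fin n → ℝ) (T : Fin n → Fin d → Fin n → ℝ)
    (U : Matrix (Fin n) (Fin d) ℝ) (V : Matrix (Fin n) (Fin n) ℝ) (b : Fin n → ℝ)
    (x : ℕ → Fin d → ℝ) : ℕ → Fin n → ℝ
  | 0 => h0
  | t + 1 => fun k =>
      σ (modeProd T (rnn2States σ h0 T U V b x t) (x t) k
        + V.mulVec (rnn2States σ h0 T U V b x t) k + U.mulVec (x t) k + b k)

/-- Hidden states of a MIRNN. -/
def mirnnStates {n d : ℕ} (σ : ℝ → ℝ) (h0 α β1 β2 b : Fin n → ℝ)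
    (U : Matrix (Fin n) (Fin d) ℝ) (V : Matrix (Fin n) (Fin n) ℝ)
    (x : ℕ → Fin d → ℝ) : ℕ → Fin n → ℝ
  | 0 => h0
  | t + 1 => fun k =>
      σ (α k * V.mulVec (mirnnStates σ h0 α β1 β2 b U V x t) k * U.mulVec (x t) k
        + β1 k * V.mulVec (mirnnStates σ h0 α β1 β2 b U V x t) k
        + β2 k * U.mulVec (x t) k + b k)

/-- The class of functions computed by CPRNNs of rank `R` and hidden size `n`
(mapping the input sequence `x¹,x²,…` to the hidden state sequence `h¹,h²,…`). -/
def HCPRNN (d n R : ℕ) (σ : ℝ → ℝ) : Set ((ℕ → Fin d → ℝ) → ℕ → Fin n → ℝ) :=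
  {h | ∃ (h0 : Fin n → ℝ) (A : Matrix (Fin n) (Fin R) ℝ) (B : Matrix (Fin d) (Fin R) ℝ)
      (C : Matrix (Fin n) (Fin R) ℝ) (U : Matrix (Fin n) (Fin d) ℝ)
      (V : Matrix (Fin n) (Fin n) ℝ) (b : Fin n → ℝ),
      ∀ x t, h x t = cprnnStates σ h0 A B C U V b x (t + 1)}

/-- The class of functions computed by CPBIRNNs of rank `R` and hidden size `n`. -/
def HCPBIRNN (d n R : ℕ) (σ : ℝ → ℝ) : Set ((ℕ → Fin d → ℝ) → ℕ → Fin n → ℝ) :=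
  {h | ∃ (h0 : Fin n → ℝ) (A : Matrix (Fin n) (Fin R) ℝ) (B : Matrix (Fin d) (Fin R) ℝ)
      (C : Matrix (Fin n) (Fin R) ℝ),
      ∀ x t, h x t = cpbirnnStates σ h0 A B C x (t + 1)}

/-- The class of functions computed by 2RNNs of hidden size `n`. -/
def H2RNN (d n : ℕ) (σ : ℝ → ℝ) : Set ((ℕ → Fin d → ℝ) → ℕ → Fin n → ℝ) :=
  {h | ∃ (h0 : Fin n → ℝ) (T : Fin n → Fin d → Fin n → ℝ) (U : Matrix (Fin n) (Fin d) ℝ)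
      (V : Matrix (Fin n) (Fin n) ℝ) (b : Fin n → ℝ),
      ∀ x t, h x t = rnn2States σ h0 T U V b x (t + 1)}

/-- The class of functions computed by MIRNNs of hidden size `n`. -/
def HMIRNN (d n : ℕ) (σ : ℝ → ℝ) : Set ((ℕ → Fin d → ℝ) → ℕ → Fin n → ℝ) :=
  {h | ∃ (h0 α β1 β2 b : Fin n → ℝ) (U : Matrix (Fin n) (Fin d) ℝ)
      (V : Matrix (Fin n) (Fin n) ℝ),
      ∀ x t, h x t = mirnnStates σ h0 α β1 β2 b U V x (t + 1)}

/-- The class `L(n,q) ∘ H_CPBIRNN(R,n)`: CPBIRNNs composed with a linear output map. -/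
def LHCPBIRNN (d n q R : ℕ) (σ : ℝ → ℝ) : Set ((ℕ → Fin d → ℝ) → ℕ → Fin q → ℝ) :=
  {f | ∃ (ℓ : (Fin n → ℝ) →ₗ[ℝ] (Fin q → ℝ)) (h : (ℕ → Fin d → ℝ) → ℕ → Fin n → ℝ),
      h ∈ HCPBIRNN d n R σ ∧ ∀ x t, f x t = ℓ (h x t)}

end

/-!
The bilinear term of a CPRNN is `C *ᵥ ((Aᵀ *ᵥ h) ⊙ (Bᵀ *ᵥ x))`. Taking `A = Vᵀ`, `B = Uᵀ` and
`C = diag α` (rank `n`) turns it into the MIRNN term `α ⊙ (V h) ⊙ (U x)`, while the first-order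
terms `β₁ ⊙ (V h)` and `β₂ ⊙ (U x)` are absorbed into the matrices `diag β₁ * V` and `diag β₂ * U`.
Appending zero columns to `A`, `B`, `C` leaves `[[A,B,C]]` unchanged, so any rank `R ≥ n` works.
-/

open Matrix

theorem modeProd_cpT {d1 d2 d3 R : ℕ} (A : Matrix (Fin d1) (Fin R) ℝ)
    (B : Matrix (Fin d2) (Fin R) ℝ) (C : Matrix (Fin d3) (Fin R) ℝ) (u : Fin d1 → ℝ)
    (v : Fin d2 → ℝ) :
    modeProd (cpT A B C) u v = C *ᵥ ((Aᵀ *ᵥ u) * (Bᵀ *ᵥ v)) := by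
  ext k
  simp only [modeProd, cpT, mulVec, dotProduct, transpose_apply, Pi.mul_apply,
    Finset.sum_mul, Finset.mul_sum]
  rw [Finset.sum_comm_cycle]
  refine Finset.sum_congr rfl fun r _ => ?_
  rw [Finset.sum_comm]
  exact Finset.sum_congr rfl fun j _ => Finset.sum_congr rfl fun i _ => by ring

theorem cprnnStates_congr_cpT {n d R R' : ℕ} (σ : ℝ → ℝ) (h0 : Fin n → ℝ)
    {A : Matrix (Fin n) (Fin R) ℝ} {B : Matrix (Fin d) (Fin R) ℝ} {C : Matrix (Fin n) (Fin R) ℝ}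
    {A' : Matrix (Fin n) (Fin R') ℝ} {B' : Matrix (Fin d) (Fin R') ℝ}
    {C' : Matrix (Fin n) (Fin R') ℝ} (hT : cpT A B C = cpT A' B' C')
    (U : Matrix (Fin n) (Fin d) ℝ) (V : Matrix (Fin n) (Fin n) ℝ) (b : Fin n → ℝ)
    (x : ℕ → Fin d → ℝ) :
    cprnnStates σ h0 A B C U V b x = cprnnStates σ h0 A' B' C' U V b x := by
  funext t
  induction t with
  | zero => rfl
  | succ t ih => simp only [cprnnStates, hT, ih]

def padZeroCols {ι : Type*} {R : ℕ} (m : ℕ) (A : Matrix ι (Fin R) ℝ) :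
    Matrix ι (Fin (R + m)) ℝ :=
  of fun i => Fin.append (A i) 0

theorem cpT_padZeroCols {d1 d2 d3 R : ℕ} (m : ℕ) (A : Matrix (Fin d1) (Fin R) ℝ)
    (B : Matrix (Fin d2) (Fin R) ℝ) (C : Matrix (Fin d3) (Fin R) ℝ) :
    cpT (padZeroCols m A) (padZeroCols m B) (padZeroCols m C) = cpT A B C := by
  funext i j k
  simp [cpT, padZeroCols, Fin.sum_univ_add]

theorem HCPRNN_mono (d n : ℕ) (σ : ℝ → ℝ) : Monotone fun R => HCPRNN d n R σ := by
  intro R R' hRR' h ⟨h0, A, B, C, U, V, b, hh⟩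
  obtain ⟨m, rfl⟩ := Nat.exists_eq_add_of_le hRR'
  refine ⟨h0, padZeroCols m A, padZeroCols m B, padZeroCols m C, U, V, b, fun x t => ?_⟩
  rw [hh, cprnnStates_congr_cpT σ h0 (cpT_padZeroCols m A B C).symm]

theorem cprnnStates_eq_mirnnStates {n d : ℕ} (σ : ℝ → ℝ) (h0 α β1 β2 b : Fin n → ℝ)
    (U : Matrix (Fin n) (Fin d) ℝ) (V : Matrix (Fin n) (Fin n) ℝ) (x : ℕ → Fin d → ℝ) :
    cprnnStates σ h0 Vᵀ Uᵀ (diagonal α) (diagonal β2 * U) (diagonal β1 * V) b x =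
      mirnnStates σ h0 α β1 β2 b U V x := by
  funext t
  induction t with
  | zero => rfl
  | succ t ih =>
    funext k
    simp only [cprnnStates, mirnnStates, ih, modeProd_cpT, transpose_transpose,
      ← mulVec_mulVec, mulVec_diagonal, Pi.mul_apply, mul_assoc]

theorem HMIRNN_subset_HCPRNN_self (d n : ℕ) (σ : ℝ → ℝ) : HMIRNN d n σ ⊆ HCPRNN d n n σ := by
  rintro h ⟨h0, α, β1, β2, b, U, V, hh⟩
  refine ⟨h0, Vᵀ, Uᵀ, diagonal α, diagonal β2 * U, diagonal β1 * V, b, fun x t => ?_⟩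
  rw [hh, cprnnStates_eq_mirnnStates]

theorem mirnn_subset_cprnn_general (d n R : ℕ) (hR : n < R) (σ : ℝ → ℝ) :
    HMIRNN d n σ ⊆ HCPRNN d n R σ :=
  (HMIRNN_subset_HCPRNN_self d n σ).trans (HCPRNN_mono d n σ hR.le)

/-- If `n ≤ d`, then for every `R > n` and every activation `σ`,
`H_MIRNN(n) ⊆ H_CPRNN(R,n)`. -/
theorem mirnn_subset_cprnn (d n R : ℕ) (hnd : n ≤ d) (hR : n < R) (σ : ℝ → ℝ) :
    HMIRNN d n σ ⊆ HCPRNN d n R σ :=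
  mirnn_subset_cprnn_general d n R hR σ
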